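/- For any graph G on n vertices, the PSD throttling number satisfies th_+(G) ≤ ⌈(n + Z_+(G))/2⌉, and this bound is attained by the complete graph K_n for every n. -/

import Mathlib

open SimpleGraph Set

variable {V : Type*}

/-- The subgraph of `G` obtained by deleting the vertices of `B`
(kept as isolated vertices). -/
def delVerts (G : SimpleGraph V) (B : Set V) : SimpleGraph V where
  Adj a b := G.Adj a b ∧ a ∉ B ∧ b ∉ B
  symm := ⟨fun _ _ ⟨h, ha, hb⟩ => ⟨h.symm, hb, ha⟩⟩
  loopless := ⟨fun a ⟨h, _, _⟩ => G.loopless.irrefl a h⟩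

/-- `u` may PSD-force `w` when the set of blue vertices is `B`:  `u` is blue, `w` is a white
neighbor of `u`, and `w` is the unique white neighbor of `u` in the component of `G - B`
containing `w`. -/
def PSDForce (G : SimpleGraph V) (B : Set V) (u w : V) : Prop :=
  u ∈ B ∧ w ∉ B ∧ G.Adj u w ∧
    ∀ x, G.Adj u x → x ∉ B → (delVerts G B).Reachable x w → x = w

/-- One round of simultaneous PSD forcing starting from blue set `B`. -/
def psdStep (G : SimpleGraph V) (B : Set V) : Set V :=
  B ∪ {w | ∃ u, PSDForce G B u w}

/-- `B` is a PSD forcing set of `G`. -/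
def IsPSDForcingSet (G : SimpleGraph V) (B : Set V) : Prop :=
  ∃ t, (psdStep G)^[t] B = Set.univ

/-- The PSD propagation time `pt_+(G; B)` of the set `B` in `G`. -/
noncomputable def psdPropTime (G : SimpleGraph V) (B : Set V) : ℕ :=
  sInf {t | (psdStep G)^[t] B = Set.univ}

/-- The PSD zero forcing number `Z_+(G)`. -/
noncomputable def psdZ (G : SimpleGraph V) : ℕ :=
  sInf {k | ∃ B : Set V, IsPSDForcingSet G B ∧ B.ncard = k}

/-- The `k`-PSD propagation time `pt_+(G, k)`: the minimum of `pt_+(G; B)` over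
PSD forcing sets `B` of size `k`. -/
noncomputable def psdPt (G : SimpleGraph V) (k : ℕ) : ℕ :=
  sInf {t | ∃ B : Set V, IsPSDForcingSet G B ∧ B.ncard = k ∧ psdPropTime G B = t}

/-- The PSD propagation time `pt_+(G) = pt_+(G, Z_+(G))`. -/
noncomputable def psdPtG (G : SimpleGraph V) : ℕ := psdPt G (psdZ G)

/-- The PSD propagation time of `B` within the induced subgraph `G[U]` (for `B ⊆ U`),
realized by making the vertices outside `U` isolated and initially blue. -/
noncomputable def psdPropTimeOn (G : SimpleGraph V) (U B : Set V) : ℕ :=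
  psdPropTime (delVerts G Uᶜ) (B ∪ Uᶜ)

/-- The vertex set of the component of `G - B` containing the white vertex `w`. -/
def compOf (G : SimpleGraph V) (B : Set V) (w : V) : Set V :=
  {x | x ∉ B ∧ (delVerts G B).Reachable x w}

/-- The PSD throttling number `th_+(G) = min_{Z_+(G) ≤ k ≤ n} (k + pt_+(G,k))`. -/
noncomputable def psdTh [Fintype V] (G : SimpleGraph V) : ℕ :=
  sInf ((fun k => k + psdPt G k) '' Set.Icc (psdZ G) (Fintype.card V))

/-!
Take a minimum PSD forcing set `B`. A blue vertex `u` that forces `x` into a component `C` of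
`G - B` can be slid onto `x`: then `x` forces `u` back, so the new set is still forcing, and each
component of its complement lies in `C \ {x}` or in `{u} ∪ (Bᶜ \ C)`. Sliding into components
holding more than half of the `n - Z_+(G)` white vertices therefore ends with all components of
size at most `⌈(n - Z_+(G))/2⌉`. Forcing is local to components, so under a forcing set every
unfinished component gains a blue vertex in every round, and the propagation time is at most
`⌈(n - Z_+(G))/2⌉`.

In `K_n` no vertex can force while two vertices are white, so `Z_+(K_n) ≥ n - 1`; then the only
candidates are `k = n - 1` and `k = n`, both giving `k + pt_+(K_n, k) = n`.
-/

section Forcing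

variable {G : SimpleGraph V} {B B₁ B₂ : Set V} {u w : V}

lemma delVerts_anti (h : B₁ ⊆ B₂) : delVerts G B₂ ≤ delVerts G B₁ :=
  fun _ _ ⟨hadj, ha, hb⟩ => ⟨hadj, fun hm => ha (h hm), fun hm => hb (h hm)⟩

lemma subset_psdStep : B ⊆ psdStep G B := subset_union_left

lemma PSDForce.mono (h : B₁ ⊆ B₂) (hw : w ∉ B₂) (hf : PSDForce G B₁ u w) :
    PSDForce G B₂ u w :=
  ⟨h hf.1, hw, hf.2.2.1, fun x hx hxB hr =>
    hf.2.2.2 x hx (fun hm => hxB (h hm)) (hr.mono (delVerts_anti h))⟩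

lemma psdStep_mono : Monotone (psdStep G) := by
  rintro B₁ B₂ h w (hw | ⟨u, hf⟩)
  · exact subset_psdStep (h hw)
  · by_cases hw₂ : w ∈ B₂
    · exact subset_psdStep hw₂
    · exact Or.inr ⟨u, hf.mono h hw₂⟩

lemma subset_iterate_psdStep (t : ℕ) : B ⊆ (psdStep G)^[t] B :=
  Function.id_le_iterate_of_id_le (fun _ => subset_psdStep) t B

lemma iterate_psdStep_mono {s t : ℕ} (h : s ≤ t) : (psdStep G)^[s] B ⊆ (psdStep G)^[t] B :=
  Function.monotone_iterate_of_id_le (fun _ => subset_psdStep) h B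

lemma isPSDForcingSet_univ : IsPSDForcingSet G univ := ⟨0, rfl⟩

lemma IsPSDForcingSet.mono (h : B₁ ⊆ B₂) (hB : IsPSDForcingSet G B₁) :
    IsPSDForcingSet G B₂ := by
  obtain ⟨t, ht⟩ := hB
  exact ⟨t, univ_subset_iff.mp (ht ▸ psdStep_mono.iterate t h)⟩

lemma IsPSDForcingSet.of_subset_psdStep (h : B₁ ⊆ psdStep G B₂)
    (hB : IsPSDForcingSet G B₁) : IsPSDForcingSet G B₂ := by
  obtain ⟨t, ht⟩ := hB.mono h
  exact ⟨t + 1, ht⟩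

lemma not_isPSDForcingSet_of_psdStep_eq (h : psdStep G B = B) (hB : B ≠ univ) :
    ¬ IsPSDForcingSet G B := by
  rintro ⟨t, ht⟩
  exact hB (Function.iterate_fixed h t ▸ ht)

end Forcing

section Components

variable {G : SimpleGraph V} {B B₁ B₂ : Set V} {u w x y : V} {t : ℕ}

lemma SimpleGraph.Reachable.of_closed {H H' : SimpleGraph V} {S : Set V}
    (hS : ∀ ⦃a b⦄, a ∈ S → H.Adj a b → b ∈ S ∧ H'.Adj a b) (h : H.Reachable x y)
    (hx : x ∈ S) : H'.Reachable x y ∧ y ∈ S := by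
  obtain ⟨p⟩ := h
  induction p with
  | nil => exact ⟨Reachable.refl _, hx⟩
  | cons hadj _ ih =>
    obtain ⟨hmem, hadj'⟩ := hS hx hadj
    obtain ⟨hr, hy⟩ := ih hmem
    exact ⟨hadj'.reachable.trans hr, hy⟩

lemma compOf_subset_compl : compOf G B w ⊆ Bᶜ := fun _ h => h.1

lemma mem_compOf_self (h : w ∉ B) : w ∈ compOf G B w := ⟨h, Reachable.refl w⟩

lemma mem_compOf_of_adj (hx : x ∈ compOf G B w) (hy : y ∉ B) (hadj : G.Adj x y) :
    y ∈ compOf G B w :=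
  ⟨hy, (Adj.reachable (G := delVerts G B) ⟨hadj.symm, hy, hx.1⟩).trans hx.2⟩

lemma compOf_eq_of_mem (hx : x ∈ compOf G B w) : compOf G B x = compOf G B w := by
  ext z
  exact ⟨fun hz => ⟨hz.1, hz.2.trans hx.2⟩, fun hz => ⟨hz.1, hz.2.trans hx.2.symm⟩⟩

lemma PSDForce.of_inter_compOf_eq (h₂ : B ⊆ B₂) (hx : x ∈ compOf G B w)
    (htr : compOf G B w ∩ B₁ = compOf G B w ∩ B₂) (hf : PSDForce G B₁ u x) :
    PSDForce G B₂ u x := by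
  obtain ⟨hu, hx₁, hadj, huniq⟩ := hf
  have hiff : ∀ z ∈ compOf G B w, z ∈ B₁ ↔ z ∈ B₂ := fun z hz => by
    simpa only [mem_inter_iff, hz, true_and] using Set.ext_iff.mp htr z
  have hu₂ : u ∈ B₂ := by
    by_cases huB : u ∈ B
    · exact h₂ huB
    · exact (hiff u (mem_compOf_of_adj hx huB hadj.symm)).mp hu
  refine ⟨hu₂, fun h => hx₁ ((hiff x hx).mpr h), hadj, fun y hy hy₂ hr => ?_⟩
  have hyC : y ∈ compOf G B w :=
    ⟨fun h => hy₂ (h₂ h), (hr.mono (delVerts_anti h₂)).trans hx.2⟩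
  have hclosed : ∀ ⦃a b⦄, a ∈ compOf G B w ∩ B₂ᶜ → (delVerts G B₂).Adj a b →
      b ∈ compOf G B w ∩ B₂ᶜ ∧ (delVerts G B₁).Adj a b := by
    rintro a b ⟨haC, ha₂⟩ ⟨hab, -, hb₂⟩
    have hbC : b ∈ compOf G B w := mem_compOf_of_adj haC (fun h => hb₂ (h₂ h)) hab
    exact ⟨⟨hbC, hb₂⟩, hab, fun h => ha₂ ((hiff a haC).mp h),
      fun h => hb₂ ((hiff b hbC).mp h)⟩
  exact huniq y hy (fun h => hy₂ ((hiff y hyC).mp h)) (hr.of_closed hclosed ⟨hyC, hy₂⟩).1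

lemma inter_psdStep_subset_of_inter_eq (h₂ : B ⊆ B₂)
    (htr : compOf G B w ∩ B₁ = compOf G B w ∩ B₂) :
    compOf G B w ∩ psdStep G B₁ ⊆ compOf G B w ∩ psdStep G B₂ := by
  rintro z ⟨hzC, hz | ⟨u, hf⟩⟩
  · exact ⟨hzC, subset_psdStep (htr ▸ mem_inter hzC hz).2⟩
  · exact ⟨hzC, Or.inr ⟨u, hf.of_inter_compOf_eq h₂ hzC htr⟩⟩

lemma inter_psdStep_eq_of_inter_eq (h₁ : B ⊆ B₁) (h₂ : B ⊆ B₂)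
    (htr : compOf G B w ∩ B₁ = compOf G B w ∩ B₂) :
    compOf G B w ∩ psdStep G B₁ = compOf G B w ∩ psdStep G B₂ :=
  (inter_psdStep_subset_of_inter_eq h₂ htr).antisymm
    (inter_psdStep_subset_of_inter_eq h₁ htr.symm)

/-- A component that gained no blue vertex in some round would, by locality, never change
again. -/
lemma IsPSDForcingSet.inter_iterate_ssubset (hB : IsPSDForcingSet G B)
    (hw : w ∉ (psdStep G)^[t] B) :
    compOf G B w ∩ (psdStep G)^[t] B ⊂ compOf G B w ∩ (psdStep G)^[t + 1] B := by
  set C := compOf G B w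
  refine (inter_subset_inter_right C (iterate_psdStep_mono t.le_succ)).ssubset_of_ne
    fun hstuck => ?_
  have hconst : ∀ s, C ∩ (psdStep G)^[t + s] B = C ∩ (psdStep G)^[t] B := by
    intro s
    induction s with
    | zero => rfl
    | succ s ih =>
      rw [← add_assoc, Function.iterate_succ_apply', inter_psdStep_eq_of_inter_eq
        (subset_iterate_psdStep _) (subset_iterate_psdStep _) ih,
        ← Function.iterate_succ_apply' (psdStep G) t B, hstuck]
  obtain ⟨T, hT⟩ := hB
  have hwT : w ∈ C ∩ (psdStep G)^[t + T] B :=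
    ⟨mem_compOf_self fun h => hw (subset_iterate_psdStep t h),
      iterate_psdStep_mono (Nat.le_add_left T t) (hT ▸ mem_univ w)⟩
  exact hw (hconst T ▸ hwT).2

lemma IsPSDForcingSet.exists_psdForce_mem_compOf (hB : IsPSDForcingSet G B) (hw : w ∉ B) :
    ∃ u x, x ∈ compOf G B w ∧ PSDForce G B u x := by
  have hnew := hB.inter_iterate_ssubset (t := 0) hw
  rw [Function.iterate_zero_apply, zero_add, Function.iterate_one] at hnew
  obtain ⟨x, ⟨hxC, hx⟩, hxB⟩ := exists_of_ssubset hnew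
  rcases hx with hx | ⟨u, hf⟩
  · exact absurd ⟨hxC, hx⟩ hxB
  · exact ⟨u, x, hxC, hf⟩

lemma IsPSDForcingSet.lt_ncard_compOf [Finite V] (hB : IsPSDForcingSet G B)
    (hw : w ∉ (psdStep G)^[t] B) : t < (compOf G B w).ncard := by
  have hcount : ∀ t, w ∉ (psdStep G)^[t] B →
      t ≤ (compOf G B w ∩ (psdStep G)^[t] B).ncard := by
    intro t
    induction t with
    | zero => exact fun _ => Nat.zero_le _
    | succ t ih =>
      intro hw
      have hw' : w ∉ (psdStep G)^[t] B := fun h => hw (iterate_psdStep_mono t.le_succ h)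
      have := ncard_lt_ncard (hB.inter_iterate_ssubset hw')
      have := ih hw'
      omega
  have hlt : compOf G B w ∩ (psdStep G)^[t] B ⊂ compOf G B w :=
    (ssubset_iff_of_subset inter_subset_left).mpr
      ⟨w, mem_compOf_self fun h => hw (subset_iterate_psdStep t h), fun h => hw h.2⟩
  exact (hcount t hw).trans_lt (ncard_lt_ncard hlt)

end Components

def CompBounded (G : SimpleGraph V) (B : Set V) (m : ℕ) : Prop :=
  ∀ w ∉ B, (compOf G B w).ncard ≤ m

section Slide

variable {G : SimpleGraph V} {B : Set V} {u x : V} {m : ℕ}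

lemma CompBounded.mono {n : ℕ} (h : CompBounded G B m) (hmn : m ≤ n) : CompBounded G B n :=
  fun w hw => (h w hw).trans hmn

lemma IsPSDForcingSet.psdPropTime_le [Finite V] (hB : IsPSDForcingSet G B)
    (hm : CompBounded G B m) : psdPropTime G B ≤ m :=
  Nat.sInf_le <| eq_univ_of_forall fun w => by
    by_contra hw
    exact (hB.lt_ncard_compOf hw).not_ge (hm w fun h => hw (subset_iterate_psdStep m h))

lemma PSDForce.compOf_diff_closed (hf : PSDForce G B u x) ⦃a b : V⦄
    (ha : a ∈ compOf G B x \ {x}) (hab : (delVerts G (insert x (B \ {u}))).Adj a b) :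
    b ∈ compOf G B x \ {x} := by
  obtain ⟨haC, hax⟩ := ha
  obtain ⟨hab, -, hb⟩ := hab
  have hbu : b ≠ u := by
    rintro rfl
    exact hax (hf.2.2.2 a hab.symm haC.1 haC.2)
  exact ⟨mem_compOf_of_adj haC (fun h => hb (mem_insert_of_mem _ ⟨h, hbu⟩)) hab,
    fun h => hb (Or.inl h)⟩

lemma PSDForce.slide (hf : PSDForce G B u x) : PSDForce G (insert x (B \ {u})) x u := by
  have huB' : u ∉ insert x (B \ {u}) := by
    rintro (h | h)
    · exact hf.2.1 (h ▸ hf.1)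
    · exact h.2 rfl
  refine ⟨mem_insert x _, huB', hf.2.2.1.symm, fun y hy hyB' hr => ?_⟩
  by_contra hyu
  have hyx : y ≠ x := fun h => hyB' (Or.inl h)
  have hyC : y ∈ compOf G B x :=
    mem_compOf_of_adj (mem_compOf_self hf.2.1) (fun h => hyB' (mem_insert_of_mem _ ⟨h, hyu⟩)) hy
  have huC := (hr.of_closed (fun a b ha hab => ⟨hf.compOf_diff_closed ha hab, hab⟩)
    ⟨hyC, hyx⟩).2
  exact huC.1.1 hf.1

lemma PSDForce.isPSDForcingSet_slide (hB : IsPSDForcingSet G B) (hf : PSDForce G B u x) :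
    IsPSDForcingSet G (insert x (B \ {u})) := by
  refine hB.of_subset_psdStep fun z hz => ?_
  by_cases hzu : z = u
  · exact Or.inr ⟨x, hzu ▸ hf.slide⟩
  · exact subset_psdStep (mem_insert_of_mem _ ⟨hz, hzu⟩)

lemma PSDForce.compOf_slide_subset (hf : PSDForce G B u x) {w : V}
    (hw : w ∉ insert x (B \ {u})) :
    compOf G (insert x (B \ {u})) w ⊆ compOf G B x \ {x} ∨
      compOf G (insert x (B \ {u})) w ⊆ insert u (Bᶜ \ compOf G B x) := by
  set B' := insert x (B \ {u})
  set S := compOf G B x \ {x}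
  by_cases hwS : w ∈ S
  · exact Or.inl fun z hz =>
      (hz.2.symm.of_closed (fun a b ha hab => ⟨hf.compOf_diff_closed ha hab, hab⟩) hwS).2
  · right
    have hclosed : ∀ ⦃a b⦄, a ∈ B'ᶜ \ S → (delVerts G B').Adj a b →
        b ∈ B'ᶜ \ S ∧ (delVerts G B').Adj a b := fun a b ha hab =>
      ⟨⟨hab.2.2, fun hbS => ha.2 (hf.compOf_diff_closed hbS hab.symm)⟩, hab⟩
    intro z hz
    obtain ⟨hzB', hzS⟩ := (hz.2.symm.of_closed hclosed ⟨hw, hwS⟩).2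
    by_cases hzu : z = u
    · exact Or.inl hzu
    · have hzB : z ∉ B := fun h => hzB' (mem_insert_of_mem _ ⟨h, hzu⟩)
      have hzx : z ≠ x := fun h => hzB' (Or.inl h)
      exact mem_insert_of_mem _ ⟨hzB, fun hzC => hzS ⟨hzC, hzx⟩⟩

lemma PSDForce.compBounded_slide [Finite V] (hf : PSDForce G B u x) :
    CompBounded G (insert x (B \ {u}))
      (max ((compOf G B x).ncard - 1) (Bᶜ.ncard - (compOf G B x).ncard + 1)) := by
  intro w hw
  rcases hf.compOf_slide_subset hw with h | h
  · calc _ ≤ (compOf G B x \ {x}).ncard := ncard_le_ncard h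
      _ = (compOf G B x).ncard - 1 := ncard_sdiff_singleton_of_mem (mem_compOf_self hf.2.1)
      _ ≤ _ := le_max_left _ _
  · calc _ ≤ (insert u (Bᶜ \ compOf G B x)).ncard := ncard_le_ncard h
      _ ≤ (Bᶜ \ compOf G B x).ncard + 1 := ncard_insert_le _ _
      _ = Bᶜ.ncard - (compOf G B x).ncard + 1 := by rw [ncard_sdiff compOf_subset_compl]
      _ ≤ _ := le_max_right _ _

lemma IsPSDForcingSet.exists_compBounded_half [Finite V] (hB : IsPSDForcingSet G B) :
    ∃ B', IsPSDForcingSet G B' ∧ B'.ncard = B.ncard ∧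
      CompBounded G B' ((Nat.card V - B.ncard + 1) / 2) := by
  suffices h : ∀ m (B : Set V), IsPSDForcingSet G B → CompBounded G B m →
      ∃ B', IsPSDForcingSet G B' ∧ B'.ncard = B.ncard ∧
        CompBounded G B' ((Nat.card V - B.ncard + 1) / 2) from
    h _ B hB fun w _ => ncard_le_ncard compOf_subset_compl
  intro m
  induction m with
  | zero => exact fun B hB hm => ⟨B, hB, rfl, hm.mono (Nat.zero_le _)⟩
  | succ m ih =>
    intro B hB hm
    by_cases hhalf : CompBounded G B ((Nat.card V - B.ncard + 1) / 2)
    · exact ⟨B, hB, rfl, hhalf⟩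
    obtain ⟨w, hw, hbig⟩ :
        ∃ w ∉ B, (Nat.card V - B.ncard + 1) / 2 < (compOf G B w).ncard := by
      simpa [CompBounded] using hhalf
    obtain ⟨u, x, hxC, hf⟩ := hB.exists_psdForce_mem_compOf hw
    rw [← compOf_eq_of_mem hxC] at hbig
    have hcard := ncard_exchange (a := x) hf.2.1 hf.1
    have hCm := hm x hf.2.1
    have hcompl := ncard_compl B
    have hCB : (compOf G B x).ncard ≤ Bᶜ.ncard := ncard_le_ncard compOf_subset_compl
    obtain ⟨B', hB', hcard', hB'm⟩ := ih _ (hf.isPSDForcingSet_slide hB)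
      (hf.compBounded_slide.mono (max_le (by omega) (by omega)))
    exact ⟨B', hB', hcard'.trans hcard, hcard ▸ hB'm⟩

end Slide

section Throttling

variable {G : SimpleGraph V} {B : Set V} {k : ℕ}

lemma psdPropTime_univ : psdPropTime G univ = 0 :=
  Nat.sInf_eq_zero.mpr (Or.inl rfl)

lemma IsPSDForcingSet.psdPropTime_pos (hB : IsPSDForcingSet G B) (hne : B ≠ univ) :
    0 < psdPropTime G B := by
  refine Nat.pos_of_ne_zero fun h0 => hne ?_
  have hmem : psdPropTime G B ∈ {t | (psdStep G)^[t] B = univ} := Nat.sInf_mem hB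
  rwa [h0] at hmem

lemma psdZ_le_ncard (hB : IsPSDForcingSet G B) : psdZ G ≤ B.ncard :=
  Nat.sInf_le ⟨B, hB, rfl⟩

lemma exists_isPSDForcingSet_ncard_eq_psdZ : ∃ B, IsPSDForcingSet G B ∧ B.ncard = psdZ G :=
  Nat.sInf_mem (⟨_, univ, isPSDForcingSet_univ, rfl⟩ :
    {k | ∃ B : Set V, IsPSDForcingSet G B ∧ B.ncard = k}.Nonempty)

lemma psdZ_le_card [Finite V] : psdZ G ≤ Nat.card V :=
  ncard_univ V ▸ psdZ_le_ncard isPSDForcingSet_univ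

lemma exists_isPSDForcingSet_ncard_eq [Finite V] (h₁ : psdZ G ≤ k) (h₂ : k ≤ Nat.card V) :
    ∃ B, IsPSDForcingSet G B ∧ B.ncard = k := by
  obtain ⟨B₀, hB₀, hcard⟩ := exists_isPSDForcingSet_ncard_eq_psdZ (G := G)
  obtain ⟨B, hB₀B, -, hB⟩ :=
    exists_subsuperset_card_eq (subset_univ B₀) (hcard ▸ h₁) ((ncard_univ V).symm ▸ h₂)
  exact ⟨B, hB₀.mono hB₀B, hB⟩

lemma psdPt_le_psdPropTime (hB : IsPSDForcingSet G B) : psdPt G B.ncard ≤ psdPropTime G B :=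
  Nat.sInf_le ⟨B, hB, rfl, rfl⟩

lemma psdPt_pos [Finite V] (hk : k < Nat.card V)
    (hex : ∃ B, IsPSDForcingSet G B ∧ B.ncard = k) : 0 < psdPt G k := by
  obtain ⟨B, hB, rfl⟩ := hex
  obtain ⟨B', hB', hcard, hpt⟩ :=
    Nat.sInf_mem (⟨_, B, hB, rfl, rfl⟩ :
      {t | ∃ B', IsPSDForcingSet G B' ∧ B'.ncard = B.ncard ∧ psdPropTime G B' = t}.Nonempty)
  unfold psdPt
  rw [← hpt]
  refine hB'.psdPropTime_pos fun h => ?_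
  rw [h, ncard_univ] at hcard
  omega

lemma psdTh_le_add_psdPt [Fintype V] (h₁ : psdZ G ≤ k) (h₂ : k ≤ Fintype.card V) :
    psdTh G ≤ k + psdPt G k :=
  Nat.sInf_le ⟨k, ⟨h₁, h₂⟩, rfl⟩

theorem psdTh_le [Fintype V] (G : SimpleGraph V) :
    psdTh G ≤ (Fintype.card V + psdZ G + 1) / 2 := by
  obtain ⟨B, hB, hcard⟩ := exists_isPSDForcingSet_ncard_eq_psdZ (G := G)
  obtain ⟨B', hB', hcard', hbounded⟩ := hB.exists_compBounded_half
  have hZ : psdZ G ≤ Fintype.card V := Nat.card_eq_fintype_card (α := V) ▸ psdZ_le_card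
  calc psdTh G ≤ psdZ G + psdPt G (psdZ G) := psdTh_le_add_psdPt le_rfl hZ
    _ ≤ psdZ G + psdPropTime G B' := by
      gcongr
      exact hcard ▸ hcard' ▸ psdPt_le_psdPropTime hB'
    _ ≤ psdZ G + (Fintype.card V - psdZ G + 1) / 2 := by
      gcongr
      simpa only [hcard, Nat.card_eq_fintype_card] using hB'.psdPropTime_le hbounded
    _ = (Fintype.card V + psdZ G + 1) / 2 := by omega

lemma psdTh_eq_card_of_card_le_psdZ_add_one [Fintype V] (h : Fintype.card V ≤ psdZ G + 1) :
    psdTh G = Fintype.card V := by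
  have hZ : psdZ G ≤ Fintype.card V := Nat.card_eq_fintype_card (α := V) ▸ psdZ_le_card
  have hpt : psdPt G (Fintype.card V) = 0 := by
    have := psdPt_le_psdPropTime (isPSDForcingSet_univ (G := G))
    rwa [psdPropTime_univ, ncard_univ, Nat.card_eq_fintype_card, Nat.le_zero] at this
  refine le_antisymm ((psdTh_le_add_psdPt hZ le_rfl).trans_eq (by rw [hpt, add_zero])) ?_
  refine le_csInf ⟨_, _, ⟨hZ, le_rfl⟩, rfl⟩ ?_
  rintro _ ⟨k, ⟨hk₁, hk₂⟩, rfl⟩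
  dsimp only
  rw [← Nat.card_eq_fintype_card] at hk₂ h ⊢
  rcases hk₂.lt_or_eq with hlt | rfl
  · have := psdPt_pos hlt (exists_isPSDForcingSet_ncard_eq hk₁ hk₂)
    omega
  · exact Nat.le_add_right _ _

lemma psdStep_top_eq_self (h : 1 < Bᶜ.ncard) : psdStep ⊤ B = B := by
  refine subset_psdStep.antisymm' ?_
  rintro w (hw | ⟨u, hu, hw, -, huniq⟩)
  · exact hw
  obtain ⟨w', hw', hne⟩ := ((one_lt_ncard_iff_nontrivial_and_finite.mp h).1).exists_ne w
  have hw'u : u ≠ w' := fun h => hw' (h ▸ hu)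
  exact absurd (huniq w' hw'u hw' (Adj.reachable ⟨hne, hw', hw⟩)) hne

lemma card_le_psdZ_top_add_one [Finite V] : Nat.card V ≤ psdZ (⊤ : SimpleGraph V) + 1 := by
  obtain ⟨B, hB, hcard⟩ := exists_isPSDForcingSet_ncard_eq_psdZ (G := (⊤ : SimpleGraph V))
  have hcompl : Bᶜ.ncard ≤ 1 := by
    by_contra! h
    refine not_isPSDForcingSet_of_psdStep_eq (psdStep_top_eq_self h) (fun hB => ?_) hB
    simp [hB] at h
  have := ncard_add_ncard_compl B
  omega

end Throttling

/-- `th_+(G) ≤ ⌈(n + Z_+(G))/2⌉`, with equality for every complete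
graph `K_n`. -/
theorem stmt14 :
    (∀ (V : Type) [Fintype V] (G : SimpleGraph V),
      psdTh G ≤ (Fintype.card V + psdZ G + 1) / 2) ∧
    (∀ n : ℕ, 1 ≤ n →
      psdTh (⊤ : SimpleGraph (Fin n)) =
        (Fintype.card (Fin n) + psdZ (⊤ : SimpleGraph (Fin n)) + 1) / 2) := by
  refine ⟨fun V _ G => psdTh_le G, fun n _ => ?_⟩
  have hlow := card_le_psdZ_top_add_one (V := Fin n)
  have hup := psdZ_le_card (G := (⊤ : SimpleGraph (Fin n)))
  rw [Nat.card_eq_fintype_card] at hlow hup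
  rw [psdTh_eq_card_of_card_le_psdZ_add_one hlow]
  omega
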